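/- Let R^(0), R^(1), ..., R^(K) be K+1 exchangeable real-valued random variables, and let γ ∈ [0,1]. Define R̄(γ) as the (1−γ)-quantile of the multiset {R^(1), ..., R^(K), ∞} (i.e., the ⌈(K+1)(1−γ)⌉-th smallest value of the K+1 values R^(1),...,R^(K),∞). Then P(R^(0) ≤ R̄(γ)) ≥ 1 − γ. -/

import Mathlib

open MeasureTheory

/-- The `r`-th smallest element of a multiset of extended reals
(1-indexed; defaults to `⊤` if out of range). -/
noncomputable def orderStat (s : Multiset EReal) (r : ℕ) : EReal :=
  (s.sort (· ≤ ·)).getD (r - 1) ⊤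

lemma le_orderStat_iff (s : Multiset EReal) (x : EReal) (r : ℕ)
    (h1 : 1 ≤ r) (h2 : r ≤ Multiset.card s) :
    x ≤ orderStat s r ↔ s.countP (fun a => decide (a < x)) ≤ r - 1 := by
  set l := s.sort (· ≤ ·) with hl
  have hsort : l.Pairwise (· ≤ ·) := s.pairwise_sort _
  have hlen : l.length = Multiset.card s := s.length_sort _
  have hcount : s.countP (fun a => decide (a < x)) = l.countP (fun a => decide (a < x)) := by
    conv_lhs => rw [← s.sort_eq (· ≤ ·), ← hl]
    simp [Multiset.coe_countP]
  have hr1 : r - 1 < l.length := by omega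
  have hget : orderStat s r = l.get ⟨r - 1, hr1⟩ := by
    rw [orderStat, ← hl, List.getD_eq_getElem _ _ hr1]
    simp
  rw [hget, hcount]
  constructor
  · intro hx
    have heq : l.countP (fun a => decide (a < x)) =
        (l.take (r-1)).countP (fun a => decide (a < x)) +
        (l.drop (r-1)).countP (fun a => decide (a < x)) := by
      rw [← List.countP_append, List.take_append_drop]
    rw [heq]
    have hdrop : (l.drop (r-1)).countP (fun a => decide (a < x)) = 0 := by
      rw [List.countP_eq_zero]
      intro a ha
      obtain ⟨j, hj, rfl⟩ := List.mem_iff_getElem.mp ha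
      have hjl : r - 1 + j < l.length := by
        have := (List.length_drop (i := r-1) (l := l)) ▸ hj
        omega
      rw [show (List.drop (r-1) l)[j] = l.get ⟨r-1+j, hjl⟩ from (List.getElem_drop' hjl).symm]
      have hle : l.get ⟨r-1, hr1⟩ ≤ l.get ⟨r - 1 + j, hjl⟩ :=
        hsort.rel_get_of_le (by simp [Fin.le_def])
      simp only [decide_eq_true_eq]
      exact fun hlt => absurd (lt_of_le_of_lt hle hlt) (not_lt.mpr hx)
    have htake : (l.take (r-1)).countP (fun a => decide (a < x)) ≤ r - 1 := by
      calc _ ≤ (l.take (r-1)).length := List.countP_le_length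
        _ ≤ r - 1 := by simp [List.length_take]
    omega
  · intro hc
    by_contra hx
    push_neg at hx
    have hall : ∀ a ∈ l.take r, decide (a < x) = true := by
      intro a ha
      obtain ⟨j, hj, rfl⟩ := List.mem_iff_getElem.mp ha
      have hjr : j < r := by
        have := (List.length_take (i := r) (l := l)) ▸ hj
        omega
      have hjl : j < l.length := by
        have := (List.length_take (i := r) (l := l)) ▸ hj
        omega
      rw [List.getElem_take]
      have : l.get ⟨j, hjl⟩ ≤ l.get ⟨r-1, hr1⟩ :=
        hsort.rel_get_of_le (by simp [Fin.le_def]; omega)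
      simpa using lt_of_le_of_lt this hx
    have hge : r ≤ l.countP (fun a => decide (a < x)) := by
      have h1' : (l.take r).countP (fun a => decide (a < x)) = (l.take r).length :=
        List.countP_eq_length.mpr hall
      have h2' : (l.take r).length = r := by simp [List.length_take]; omega
      calc r = (l.take r).countP (fun a => decide (a < x)) := by rw [h1', h2']
        _ ≤ l.countP (fun a => decide (a < x)) := (List.take_sublist r l).countP_le
    omega

open Finset in
lemma card_filter_perm {n : ℕ} (σ : Equiv.Perm (Fin n)) (p : Fin n → Prop) [DecidablePred p] :
    (univ.filter fun s => p (σ s)).card = (univ.filter fun i => p i).card := by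
  simp only [Finset.card_filter]
  exact Equiv.sum_comp σ (fun i => if p i then 1 else 0)

open Finset in
lemma rank_lemma {n : ℕ} (v : Fin n → ℝ) (r : ℕ) (hr : r ≤ n) :
    r ≤ (univ.filter fun j => (univ.filter fun i => v i < v j).card ≤ r - 1).card := by
  rcases Nat.eq_zero_or_pos r with rfl | hr0
  · simp
  set σ := Tuple.sort v with hσ
  have hmono : Monotone (v ∘ σ) := Tuple.monotone_sort v
  have key : ∀ t : Fin r, σ (Fin.castLE hr t) ∈
      (univ.filter fun j => (univ.filter fun i => v i < v j).card ≤ r - 1) := by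
    intro t
    simp only [mem_filter, mem_univ, true_and]
    set j : Fin n := Fin.castLE hr t with hj
    calc (univ.filter fun i => v i < v (σ j)).card
        = (univ.filter fun s => v (σ s) < v (σ j)).card :=
          (card_filter_perm σ (fun i => v i < v (σ j))).symm
      _ ≤ (Finset.Iio j).card := by
          apply Finset.card_le_card
          intro s hs
          simp only [mem_filter, mem_univ, true_and] at hs
          rw [Finset.mem_Iio]
          by_contra hle
          exact absurd (hmono (not_lt.mp hle)) (not_le.mpr hs)
      _ = (j : ℕ) := Fin.card_Iio j
      _ ≤ r - 1 := by have := t.isLt; simp [hj]; omega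
  have hinj : Function.Injective (fun t : Fin r => σ (Fin.castLE hr t)) := by
    intro a b hab
    exact Fin.castLE_injective hr (σ.injective hab)
  calc r = (univ : Finset (Fin r)).card := by simp
    _ ≤ _ := Finset.card_le_card_of_injOn _ (fun t _ => key t) hinj.injOn

open Finset ENNReal in
/-- Split conformal prediction coverage guarantee: if `R 0, …, R K` are
exchangeable real random variables and `R̄(γ)` is the `⌈(K+1)(1-γ)⌉`-th smallest
value of `{R 1, …, R K, ∞}`, then `P(R 0 ≤ R̄(γ)) ≥ 1 - γ`. -/
theorem stmt0 {Ω : Type*} [MeasurableSpace Ω] (μ : Measure Ω) [IsProbabilityMeasure μ]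
    (K : ℕ) (R : Fin (K + 1) → Ω → ℝ) (hmeas : ∀ i, Measurable (R i))
    (hexch : ∀ σ : Equiv.Perm (Fin (K + 1)),
      Measure.map (fun ω i => R (σ i) ω) μ = Measure.map (fun ω i => R i ω) μ)
    (γ : ℝ) (hγ : γ ∈ Set.Icc (0 : ℝ) 1) :
    1 - ENNReal.ofReal γ ≤
      μ {ω | ((R 0 ω : ℝ) : EReal) ≤
        orderStat ((⊤ : EReal) ::ₘ
          ((Finset.univ : Finset (Fin K)).val.map fun i => ((R i.succ ω : ℝ) : EReal)))
          ⌈((K : ℝ) + 1) * (1 - γ)⌉₊} := by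
  obtain ⟨hγ0, hγ1⟩ := hγ
  set r := ⌈((K : ℝ) + 1) * (1 - γ)⌉₊ with hrdef
  rcases Nat.eq_zero_or_pos r with hr0 | hr1
  · -- γ = 1 case: LHS is 0
    have h1γ : (1:ℝ) ≤ γ := by
      by_contra h
      push_neg at h
      have hpos : 0 < ((K:ℝ)+1)*(1-γ) := by
        have : (0:ℝ) < 1 - γ := by linarith
        positivity
      have := Nat.ceil_pos.mpr hpos
      omega
    have : (1 : ℝ≥0∞) ≤ ENNReal.ofReal γ := by
      rw [← ENNReal.ofReal_one]
      exact ENNReal.ofReal_le_ofReal h1γ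
    rw [tsub_eq_zero_of_le this]
    exact zero_le
  · have hrK : r ≤ K + 1 := by
      rw [hrdef]
      apply Nat.ceil_le.mpr
      have h1 : (1:ℝ) - γ ≤ 1 := by linarith
      calc ((K:ℝ)+1)*(1-γ) ≤ ((K:ℝ)+1)*1 := by
            apply mul_le_mul_of_nonneg_left h1; positivity
        _ = ((K:ℕ):ℝ) + 1 := by ring
        _ = ((K+1 : ℕ) : ℝ) := by push_cast; ring
    -- the rank function
    set c : Fin (K+1) → Ω → ℕ :=
      fun j ω => (univ.filter fun i => R i ω < R j ω).card with hc
    set A : Fin (K+1) → Set Ω := fun j => {ω | c j ω ≤ r - 1} with hA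
    -- Step A : the target set equals A 0
    have hset : {ω | ((R 0 ω : ℝ) : EReal) ≤
        orderStat ((⊤ : EReal) ::ₘ
          ((Finset.univ : Finset (Fin K)).val.map fun i => ((R i.succ ω : ℝ) : EReal))) r}
        = A 0 := by
      ext ω
      set s : Multiset EReal := (⊤ : EReal) ::ₘ
        ((Finset.univ : Finset (Fin K)).val.map fun i => ((R i.succ ω : ℝ) : EReal)) with hs
      have hcard : Multiset.card s = K + 1 := by
        simp [hs]
      rw [Set.mem_setOf_eq, le_orderStat_iff s _ r hr1 (by omega)]
      have hcountP : s.countP (fun a => decide (a < ((R 0 ω : ℝ) : EReal))) = c 0 ω := by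
        rw [hs, Multiset.countP_cons]
        have htop : ¬ ((⊤ : EReal) < ((R 0 ω : ℝ) : EReal)) := not_lt.mpr le_top
        simp only [htop, decide_eq_false_iff_not.mpr htop, if_false, add_zero, Multiset.countP_map]
        have : (Multiset.filter
            (fun a => decide (((R a.succ ω : ℝ) : EReal) < ((R 0 ω : ℝ) : EReal)) = true)
            (univ : Finset (Fin K)).val).card
            = (univ.filter fun i : Fin K => R i.succ ω < R 0 ω).card := by
          simp [Finset.card, Finset.filter, EReal.coe_lt_coe_iff]
        rw [this, hc]
        simp only [Finset.card_filter]
        rw [Fin.sum_univ_succ]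
        simp
      rw [hcountP]
      simp [hA]
    rw [hset]
    -- measurability
    have cMeas : ∀ j, Measurable (c j) := by
      intro j
      have : c j = fun ω => ∑ i, if R i ω < R j ω then 1 else 0 :=
        funext fun ω => Finset.card_filter _ _
      rw [this]
      exact Finset.measurable_sum _ (fun i _ =>
        Measurable.ite (measurableSet_lt (hmeas i) (hmeas j)) measurable_const measurable_const)
    have hAmeas : ∀ j, MeasurableSet (A j) := by
      intro j
      have : A j = c j ⁻¹' Set.Iic (r-1) := rfl
      rw [this]
      exact (cMeas j) measurableSet_Iic
    -- exchangeability : all A j have the same measure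
    set f : Ω → (Fin (K+1) → ℝ) := fun ω i => R i ω with hf
    have fMeas : Measurable f := measurable_pi_lambda f hmeas
    set B : Set (Fin (K+1) → ℝ) := {v | (univ.filter fun i => v i < v 0).card ≤ r - 1} with hB
    have BMeas : MeasurableSet B := by
      have hcard : Measurable (fun v : Fin (K+1) → ℝ => (univ.filter fun i => v i < v 0).card) := by
        have : (fun v : Fin (K+1) → ℝ => (univ.filter fun i => v i < v 0).card)
            = fun v => ∑ i, if v i < v 0 then 1 else 0 :=
          funext fun v => Finset.card_filter _ _
        rw [this]
        exact Finset.measurable_sum _ (fun i _ =>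
          Measurable.ite (measurableSet_lt (measurable_pi_apply i) (measurable_pi_apply 0))
            measurable_const measurable_const)
      exact hcard measurableSet_Iic
    have hsame : ∀ j, μ (A j) = μ (A 0) := by
      intro j
      set σ := Equiv.swap (0 : Fin (K+1)) j with hσ
      set g : Ω → (Fin (K+1) → ℝ) := fun ω i => R (σ i) ω with hg
      have gMeas : Measurable g := measurable_pi_lambda g (fun i => hmeas (σ i))
      have hgB : g ⁻¹' B = A j := by
        ext ω
        simp only [Set.mem_preimage, hB, hg, Set.mem_setOf_eq, hA, hc]
        have hσ0 : σ 0 = j := Equiv.swap_apply_left 0 j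
        simp only [hσ0]
        rw [card_filter_perm σ (fun i => R i ω < R j ω)]
      have hfB : f ⁻¹' B = A 0 := rfl
      calc μ (A j) = μ (g ⁻¹' B) := by rw [hgB]
        _ = Measure.map g μ B := (Measure.map_apply gMeas BMeas).symm
        _ = Measure.map f μ B := by rw [hexch σ]
        _ = μ (f ⁻¹' B) := Measure.map_apply fMeas BMeas
        _ = μ (A 0) := by rw [hfB]
    -- counting bound : pointwise at least r of the events hold
    have hpoint : ∀ ω, (r : ℝ≥0∞) ≤ ∑ j, (A j).indicator (fun _ => (1:ℝ≥0∞)) ω := by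
      intro ω
      have hcnt : r ≤ (univ.filter fun j => ω ∈ A j).card := by
        have := rank_lemma (fun i => R i ω) r hrK
        simpa [hA, hc] using this
      calc (r : ℝ≥0∞) ≤ ((univ.filter fun j => ω ∈ A j).card : ℝ≥0∞) := by
            exact_mod_cast hcnt
        _ = ∑ j, (A j).indicator (fun _ => (1:ℝ≥0∞)) ω := by
            rw [Finset.card_filter]
            push_cast
            apply Finset.sum_congr rfl
            intro j _
            by_cases hj : ω ∈ A j <;> simp [hj, Set.indicator_apply]
    -- integrate
    have hsum : (r : ℝ≥0∞) ≤ ∑ j, μ (A j) := by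
      have h1 : (r : ℝ≥0∞) = ∫⁻ _, (r : ℝ≥0∞) ∂μ := by
        simp
      rw [h1]
      calc ∫⁻ _, (r : ℝ≥0∞) ∂μ ≤ ∫⁻ ω, ∑ j, (A j).indicator (fun _ => (1:ℝ≥0∞)) ω ∂μ :=
            lintegral_mono hpoint
        _ = ∑ j, ∫⁻ ω, (A j).indicator (fun _ => (1:ℝ≥0∞)) ω ∂μ :=
            lintegral_finset_sum _ (fun j _ => measurable_const.indicator (hAmeas j))
        _ = ∑ j, μ (A j) := by
            apply Finset.sum_congr rfl
            intro j _
            exact lintegral_indicator_one (hAmeas j)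
    have hKA : (r : ℝ≥0∞) ≤ (K + 1 : ℝ≥0∞) * μ (A 0) := by
      calc (r : ℝ≥0∞) ≤ ∑ j, μ (A j) := hsum
        _ = ∑ _j : Fin (K+1), μ (A 0) := Finset.sum_congr rfl (fun j _ => hsame j)
        _ = (K + 1 : ℝ≥0∞) * μ (A 0) := by
            rw [Finset.sum_const]
            simp [nsmul_eq_mul]
    -- conclude
    have hreal : ((K:ℝ)+1) * (1-γ) ≤ (r : ℝ) := Nat.le_ceil _
    have hofReal : (K + 1 : ℝ≥0∞) * (1 - ENNReal.ofReal γ) ≤ (r : ℝ≥0∞) := by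
      have h1 : (1 : ℝ≥0∞) - ENNReal.ofReal γ = ENNReal.ofReal (1 - γ) := by
        rw [ENNReal.ofReal_sub _ hγ0, ENNReal.ofReal_one]
      rw [h1]
      calc (K + 1 : ℝ≥0∞) * ENNReal.ofReal (1 - γ)
          = ENNReal.ofReal (((K:ℝ)+1) * (1-γ)) := by
            rw [ENNReal.ofReal_mul (by positivity)]
            congr 1
            rw [show ((K:ℝ)+1) = ((K+1 : ℕ) : ℝ) by push_cast; ring, ENNReal.ofReal_natCast]
            push_cast; ring
        _ ≤ ENNReal.ofReal (r : ℝ) := ENNReal.ofReal_le_ofReal hreal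
        _ = (r : ℝ≥0∞) := ENNReal.ofReal_natCast r
    have hKne : (K + 1 : ℝ≥0∞) ≠ 0 := by
      simp
    have hKnetop : (K + 1 : ℝ≥0∞) ≠ ⊤ := by
      simp [ENNReal.add_ne_top]
    have := le_trans hofReal hKA
    exact (ENNReal.mul_le_mul_iff_right hKne hKnetop).mp this
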